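/- Let Q₃ denote the quotient of A⊗A⊗A (over ℂ) by the span of all elements s(x)a′⊗b′⊗c′−a′⊗t(x)b′⊗c′ and a′⊗s(x)b′⊗c′−a′⊗b′⊗t(x)c′ (x∈B), and assume Q₃ is non-degenerate for right multiplication in the first and in the third leg (if u∈Q₃ satisfies u·(c⊗1⊗1)=0 for all c∈A then u=0, and likewise for u·(1⊗1⊗c)). Then the canonical maps satisfy the following pentagon equations for all a,b,c∈A. For T̃ρ: choose representatives Σⱼuⱼ⊗vⱼ of T̃ρ(a⊗b), Σⱼₖpⱼₖ⊗qⱼₖ of T̃ρ(vⱼ⊗c) for each j, Σₗrₗ⊗sₗ of T̃ρ(b⊗c), Σₗₘdₗₘ⊗eₗₘ of T̃ρ(a⊗sₗ) for each l, and Σₗₘₙfₗₘₙ⊗gₗₘₙ of T̃ρ(dₗₘ⊗rₗ) for each l,m; then Σⱼₖ uⱼ⊗pⱼₖ⊗qⱼₖ = Σₗₘₙ fₗₘₙ⊗gₗₘₙ⊗eₗₘ in Q₃. For T̃λ: choose representatives Σⱼuⱼ⊗vⱼ of T̃λ(b⊗c), Σₗrₗ⊗sₗ of T̃λ(a⊗b),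 Σₗₘdₗₘ⊗eₗₘ of T̃λ(rₗ⊗c) for each l, and Σₗₘₙfₗₘₙ⊗gₗₘₙ of T̃λ(sₗ⊗eₗₘ) for each l,m; then Σⱼ (class of T̃λ(a⊗uⱼ) in legs 1,2)⊗vⱼ = Σₗₘₙ dₗₘ⊗fₗₘₙ⊗gₗₘₙ in Q₃. (All expressions are independent of the chosen representatives.) -/

import Mathlib

open scoped TensorProduct

noncomputable section

/-- A multiplier of a non-unital complex algebra `A`: a pair `T = (L, R)` of ℂ-linear maps
`A → A` satisfying `L (a*b) = L a * b`, `R (a*b) = a * R b` and `R a * b = a * L b`.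
We write `T a := L a` and `a T := R a`. -/
structure Mult (A : Type*) [NonUnitalRing A] [Module ℂ A]
    [SMulCommClass ℂ A A] [IsScalarTower ℂ A A] where
  L : A →ₗ[ℂ] A
  R : A →ₗ[ℂ] A
  hL : ∀ a b : A, L (a * b) = L a * b
  hR : ∀ a b : A, R (a * b) = a * R b
  hC : ∀ a b : A, R a * b = a * L b

namespace Mult

variable {A : Type*} [NonUnitalRing A] [Module ℂ A] [SMulCommClass ℂ A A] [IsScalarTower ℂ A A]

/-- Multiplication of multipliers: `(L,R)·(L′,R′) = (L∘L′, R′∘R)`. -/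
instance : Mul (Mult A) :=
  ⟨fun T U =>
    { L := T.L ∘ₗ U.L
      R := U.R ∘ₗ T.R
      hL := fun a b => by simp [U.hL, T.hL]
      hR := fun a b => by simp [T.hR, U.hR]
      hC := fun a b => by simp [U.hC, T.hC] }⟩

instance : Add (Mult A) :=
  ⟨fun T U =>
    { L := T.L + U.L
      R := T.R + U.R
      hL := fun a b => by simp [T.hL, U.hL, add_mul]
      hR := fun a b => by simp [T.hR, U.hR, mul_add]
      hC := fun a b => by simp [T.hC, U.hC, add_mul, mul_add] }⟩

instance : SMul ℂ (Mult A) :=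
  ⟨fun c T =>
    { L := c • T.L
      R := c • T.R
      hL := fun a b => by simp [T.hL, smul_mul_assoc]
      hR := fun a b => by simp [T.hR, mul_smul_comm]
      hC := fun a b => by simp [T.hC, smul_mul_assoc, mul_smul_comm] }⟩

end Mult

section Maps

variable {A : Type*} [NonUnitalRing A] [Module ℂ A] [SMulCommClass ℂ A A] [IsScalarTower ℂ A A]

/-- `w ↦ w · (c ⊗ 1)` on `A ⊗ A`. -/
def rmul₁ (c : A) : A ⊗[ℂ] A →ₗ[ℂ] A ⊗[ℂ] A :=
  TensorProduct.map (LinearMap.mulRight ℂ c) LinearMap.id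

/-- `w ↦ w · (1 ⊗ c)` on `A ⊗ A`. -/
def rmul₂ (c : A) : A ⊗[ℂ] A →ₗ[ℂ] A ⊗[ℂ] A :=
  TensorProduct.map LinearMap.id (LinearMap.mulRight ℂ c)

/-- `w ↦ (c ⊗ 1) · w` on `A ⊗ A`. -/
def lmul₁ (c : A) : A ⊗[ℂ] A →ₗ[ℂ] A ⊗[ℂ] A :=
  TensorProduct.map (LinearMap.mulLeft ℂ c) LinearMap.id

/-- `w ↦ (1 ⊗ c) · w` on `A ⊗ A`. -/
def lmul₂ (c : A) : A ⊗[ℂ] A →ₗ[ℂ] A ⊗[ℂ] A :=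
  TensorProduct.map LinearMap.id (LinearMap.mulLeft ℂ c)

/-- `b ↦ a ⊗ b`. -/
def tmulL (a : A) : A →ₗ[ℂ] A ⊗[ℂ] A := TensorProduct.mk ℂ A A a

/-- `a ↦ a ⊗ b`. -/
def tmulR (b : A) : A →ₗ[ℂ] A ⊗[ℂ] A := (TensorProduct.mk ℂ A A).flip b

/-- `(x ⊗ y) ⊗ v ↦ x ⊗ (y * v)`. -/
def mulIn23 : (A ⊗[ℂ] A) ⊗[ℂ] A →ₗ[ℂ] A ⊗[ℂ] A :=
  TensorProduct.map LinearMap.id (LinearMap.mul' ℂ A) ∘ₗ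
    (TensorProduct.assoc ℂ A A A).toLinearMap

/-- `(x ⊗ y) ⊗ v ↦ x ⊗ (v * y)`. -/
def mulIn23' : (A ⊗[ℂ] A) ⊗[ℂ] A →ₗ[ℂ] A ⊗[ℂ] A :=
  TensorProduct.map LinearMap.id
      (LinearMap.mul' ℂ A ∘ₗ (TensorProduct.comm ℂ A A).toLinearMap) ∘ₗ
    (TensorProduct.assoc ℂ A A A).toLinearMap

/-- `u ⊗ (x ⊗ y) ↦ (x * u) ⊗ y`. -/
def mulIn1 : A ⊗[ℂ] (A ⊗[ℂ] A) →ₗ[ℂ] A ⊗[ℂ] A :=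
  TensorProduct.map (LinearMap.mul' ℂ A) LinearMap.id ∘ₗ
    (TensorProduct.assoc ℂ A A A).symm.toLinearMap ∘ₗ
    (TensorProduct.leftComm ℂ A A A).toLinearMap

/-- `u ⊗ (x ⊗ y) ↦ (u * x) ⊗ y`. -/
def mulIn1' : A ⊗[ℂ] (A ⊗[ℂ] A) →ₗ[ℂ] A ⊗[ℂ] A :=
  TensorProduct.map (LinearMap.mul' ℂ A ∘ₗ (TensorProduct.comm ℂ A A).toLinearMap)
      LinearMap.id ∘ₗ
    (TensorProduct.assoc ℂ A A A).symm.toLinearMap ∘ₗ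
    (TensorProduct.leftComm ℂ A A A).toLinearMap

end Maps

/-- The basic data for a left multiplier bialgebroid: non-unital complex algebras `A`, `B`,
an algebra homomorphism `s : B → M(A)`, an algebra anti-homomorphism `t : B → M(A)` with
commuting images; `A` is idempotent and non-degenerate, `s`, `t` are faithful and the spans
of `s(B)A` and `t(B)A` equal `A`. -/
structure BaseData (A B : Type*) [NonUnitalRing A] [Module ℂ A] [SMulCommClass ℂ A A]
    [IsScalarTower ℂ A A] [NonUnitalRing B] [Module ℂ B] [SMulCommClass ℂ B B]
    [IsScalarTower ℂ B B] where
  s : B → Mult A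
  t : B → Mult A
  s_add : ∀ x y : B, s (x + y) = s x + s y
  s_smul : ∀ (c : ℂ) (x : B), s (c • x) = c • s x
  s_mul : ∀ x y : B, s (x * y) = s x * s y
  t_add : ∀ x y : B, t (x + y) = t x + t y
  t_smul : ∀ (c : ℂ) (x : B), t (c • x) = c • t x
  t_mul : ∀ x y : B, t (x * y) = t y * t x
  st_comm : ∀ x y : B, s x * t y = t y * s x
  A_nd : ∀ a : A, (∀ b : A, a * b = 0) → a = 0
  A_idem : Submodule.span ℂ {z : A | ∃ a b : A, z = a * b} = ⊤
  s_faithful : ∀ x : B, (∀ a : A, (s x).L a = 0) → x = 0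
  t_faithful : ∀ x : B, (∀ a : A, (t x).L a = 0) → x = 0
  s_span : Submodule.span ℂ {z : A | ∃ (x : B) (a : A), z = (s x).L a} = ⊤
  t_span : Submodule.span ℂ {z : A | ∃ (x : B) (a : A), z = (t x).L a} = ⊤

section LeftBgd

variable {A B : Type*}
  [NonUnitalRing A] [Module ℂ A] [SMulCommClass ℂ A A] [IsScalarTower ℂ A A]
  [NonUnitalRing B] [Module ℂ B] [SMulCommClass ℂ B B] [IsScalarTower ℂ B B]

/-- The subspace of `A ⊗ A` by which one quotients to obtain `A ⊗̄ A`: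
the span of all `s(x)a ⊗ b − a ⊗ t(x)b`. -/
def BaseData.relB (D : BaseData A B) : Submodule ℂ (A ⊗[ℂ] A) :=
  Submodule.span ℂ
    {z : A ⊗[ℂ] A | ∃ (x : B) (a b : A), z = (D.s x).L a ⊗ₜ[ℂ] b - a ⊗ₜ[ℂ] (D.t x).L b}

/-- Non-degeneracy of `A ⊗̄ A` as a right module over `A ⊗ 1` and over `1 ⊗ A`,
formulated via representatives. -/
def condA3 (D : BaseData A B) : Prop :=
  (∀ u : A ⊗[ℂ] A, (∀ c : A, rmul₁ c u ∈ D.relB) → u ∈ D.relB) ∧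
  (∀ u : A ⊗[ℂ] A, (∀ c : A, rmul₂ c u ∈ D.relB) → u ∈ D.relB)

/-- (L1): `T̃λ(s(x)a⊗b) = T̃λ(a⊗b)(1⊗t(x))` and `T̃ρ(a⊗t(y)b) = T̃ρ(a⊗b)(s(y)⊗1)`. -/
def condL1 (D : BaseData A B) (Tl Tr : A ⊗[ℂ] A →ₗ[ℂ] A ⊗[ℂ] A) : Prop :=
  (∀ (x : B) (a b : A),
      Tl ((D.s x).L a ⊗ₜ[ℂ] b) -
        TensorProduct.map LinearMap.id (D.t x).R (Tl (a ⊗ₜ[ℂ] b)) ∈ D.relB) ∧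
  (∀ (y : B) (a b : A),
      Tr (a ⊗ₜ[ℂ] (D.t y).L b) -
        TensorProduct.map (D.s y).R LinearMap.id (Tr (a ⊗ₜ[ℂ] b)) ∈ D.relB)

/-- (L2λ): `T̃λ(a ⊗ s(x)t(y)b s(x′)t(y′)) = (t(y)⊗s(x))·T̃λ(t(y′)a⊗b)·(1⊗s(x′))`. -/
def condL2lam (D : BaseData A B) (Tl : A ⊗[ℂ] A →ₗ[ℂ] A ⊗[ℂ] A) : Prop :=
  ∀ (a b : A) (x x' y y' : B),
    Tl (a ⊗ₜ[ℂ] ((D.s x).L ((D.t y).L ((D.t y').R ((D.s x').R b))))) -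
      TensorProduct.map (D.t y).L (D.s x).L
        (TensorProduct.map LinearMap.id (D.s x').R (Tl ((D.t y').L a ⊗ₜ[ℂ] b))) ∈ D.relB

/-- (L2ρ): `T̃ρ(s(x)t(y)a s(x′)t(y′) ⊗ b) = (t(y)⊗s(x))·T̃ρ(a⊗s(x′)b)·(t(y′)⊗1)`. -/
def condL2rho (D : BaseData A B) (Tr : A ⊗[ℂ] A →ₗ[ℂ] A ⊗[ℂ] A) : Prop :=
  ∀ (a b : A) (x x' y y' : B),
    Tr (((D.s x).L ((D.t y).L ((D.t y').R ((D.s x').R a)))) ⊗ₜ[ℂ] b) -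
      TensorProduct.map (D.t y).L (D.s x).L
        (TensorProduct.map (D.t y').R LinearMap.id (Tr (a ⊗ₜ[ℂ] (D.s x').L b))) ∈ D.relB

/-- (L3): `T̃λ(a⊗b)·(1⊗c) = T̃ρ(b⊗c)·(a⊗1)`. -/
def condL3 (D : BaseData A B) (Tl Tr : A ⊗[ℂ] A →ₗ[ℂ] A ⊗[ℂ] A) : Prop :=
  ∀ a b c : A, rmul₂ c (Tl (a ⊗ₜ[ℂ] b)) - rmul₁ a (Tr (b ⊗ₜ[ℂ] c)) ∈ D.relB

/-- (L4): `T̃λ(ba⊗c) = T̃λ(b⊗c)·(a⊗1)` and `T̃ρ(a⊗bc) = T̃ρ(a⊗b)·(1⊗c)`. -/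
def condL4 (D : BaseData A B) (Tl Tr : A ⊗[ℂ] A →ₗ[ℂ] A ⊗[ℂ] A) : Prop :=
  (∀ a b c : A, Tl ((b * a) ⊗ₜ[ℂ] c) - rmul₁ a (Tl (b ⊗ₜ[ℂ] c)) ∈ D.relB) ∧
  (∀ a b c : A, Tr (a ⊗ₜ[ℂ] (b * c)) - rmul₂ c (Tr (a ⊗ₜ[ℂ] b)) ∈ D.relB)

/-- (L5λ): whenever `u = Σⱼ uⱼ⊗vⱼ` represents `T̃λ(a⊗c)`, one has
`T̃λ(a ⊗ bc) = Σⱼ T̃λ(uⱼ⊗b)·(1⊗vⱼ)`. -/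
def condL5lam (D : BaseData A B) (Tl : A ⊗[ℂ] A →ₗ[ℂ] A ⊗[ℂ] A) : Prop :=
  ∀ (a b c : A) (u : A ⊗[ℂ] A), u - Tl (a ⊗ₜ[ℂ] c) ∈ D.relB →
    Tl (a ⊗ₜ[ℂ] (b * c)) -
      mulIn23 (TensorProduct.map (Tl ∘ₗ tmulR b) LinearMap.id u) ∈ D.relB

/-- (L5ρ): whenever `u = Σⱼ uⱼ⊗vⱼ` represents `T̃ρ(b⊗c)`, one has
`T̃ρ(ab ⊗ c) = Σⱼ T̃ρ(a⊗vⱼ)·(uⱼ⊗1)`. -/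
def condL5rho (D : BaseData A B) (Tr : A ⊗[ℂ] A →ₗ[ℂ] A ⊗[ℂ] A) : Prop :=
  ∀ (a b c : A) (u : A ⊗[ℂ] A), u - Tr (b ⊗ₜ[ℂ] c) ∈ D.relB →
    Tr ((a * b) ⊗ₜ[ℂ] c) -
      mulIn1 (TensorProduct.map LinearMap.id (Tr ∘ₗ tmulL a) u) ∈ D.relB

/-- The subspace of `A ⊗ A ⊗ A` by which one quotients to obtain the two-sided balanced
triple tensor product: the span of all `s(x)a⊗b⊗c − a⊗t(x)b⊗c` and
`a⊗s(x)b⊗c − a⊗b⊗t(x)c`. -/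
def BaseData.span₃ (D : BaseData A B) : Submodule ℂ (A ⊗[ℂ] (A ⊗[ℂ] A)) :=
  Submodule.span ℂ
    ({w : A ⊗[ℂ] (A ⊗[ℂ] A) | ∃ (x : B) (a b c : A),
        w = (D.s x).L a ⊗ₜ[ℂ] (b ⊗ₜ[ℂ] c) - a ⊗ₜ[ℂ] ((D.t x).L b ⊗ₜ[ℂ] c)} ∪
     {w : A ⊗[ℂ] (A ⊗[ℂ] A) | ∃ (x : B) (a b c : A),
        w = a ⊗ₜ[ℂ] ((D.s x).L b ⊗ₜ[ℂ] c) - a ⊗ₜ[ℂ] (b ⊗ₜ[ℂ] (D.t x).L c)})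

/-- (L6): mixed coassociativity; whenever `u` represents `T̃ρ(b⊗c)` and `p` represents
`T̃λ(a⊗b)`, the elements `Σⱼ T̃λ(a⊗uⱼ)⊗vⱼ` and `Σₖ pₖ⊗T̃ρ(qₖ⊗c)` agree in the
balanced triple tensor product. -/
def condL6 (D : BaseData A B) (Tl Tr : A ⊗[ℂ] A →ₗ[ℂ] A ⊗[ℂ] A) : Prop :=
  ∀ (a b c : A) (u p : A ⊗[ℂ] A), u - Tr (b ⊗ₜ[ℂ] c) ∈ D.relB →
    p - Tl (a ⊗ₜ[ℂ] b) ∈ D.relB →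
    (TensorProduct.assoc ℂ A A A)
        (TensorProduct.map (Tl ∘ₗ tmulL a) LinearMap.id u) -
      TensorProduct.map LinearMap.id (Tr ∘ₗ tmulR c) p ∈ D.span₃

/-- A left multiplier bialgebroid, presented by its canonical maps. -/
def IsLeftBialgebroid (D : BaseData A B) (Tl Tr : A ⊗[ℂ] A →ₗ[ℂ] A ⊗[ℂ] A) : Prop :=
  condA3 D ∧ condL1 D Tl Tr ∧ condL2lam D Tl ∧ condL2rho D Tr ∧ condL3 D Tl Tr ∧
    condL4 D Tl Tr ∧ condL5lam D Tl ∧ condL5rho D Tr ∧ condL6 D Tl Tr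

/-- A left counit for a left multiplier bialgebroid. -/
def IsLeftCounit (D : BaseData A B) (Tl Tr : A ⊗[ℂ] A →ₗ[ℂ] A ⊗[ℂ] A)
    (ε : A →ₗ[ℂ] B) : Prop :=
  (∀ (x : B) (a : A), ε ((D.s x).L a) = x * ε a) ∧
  (∀ (y : B) (a : A), ε ((D.t y).L a) = ε a * y) ∧
  (∀ (a b : A) (n : ℕ) (uu vv : Fin n → A),
      (∑ j, uu j ⊗ₜ[ℂ] vv j) - Tr (a ⊗ₜ[ℂ] b) ∈ D.relB →
      ∑ j, (D.t (ε (uu j))).L (vv j) = a * b) ∧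
  (∀ (a b : A) (n : ℕ) (uu vv : Fin n → A),
      (∑ j, uu j ⊗ₜ[ℂ] vv j) - Tl (a ⊗ₜ[ℂ] b) ∈ D.relB →
      ∑ j, (D.s (ε (vv j))).L (uu j) = a * b)

/-- The domain relation for the canonical map `Tλ`: the span of all
`t(x)a ⊗ b − a ⊗ b·t(x)`. -/
def relLam (D : BaseData A B) : Submodule ℂ (A ⊗[ℂ] A) :=
  Submodule.span ℂ
    {z : A ⊗[ℂ] A | ∃ (x : B) (a b : A), z = (D.t x).L a ⊗ₜ[ℂ] b - a ⊗ₜ[ℂ] (D.t x).R b}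

/-- The domain relation for the canonical map `Tρ`: the span of all
`a·s(x) ⊗ b − a ⊗ s(x)b`. -/
def relRho (D : BaseData A B) : Submodule ℂ (A ⊗[ℂ] A) :=
  Submodule.span ℂ
    {z : A ⊗[ℂ] A | ∃ (x : B) (a b : A), z = (D.s x).R a ⊗ₜ[ℂ] b - a ⊗ₜ[ℂ] (D.s x).L b}

/-- The left ideal `Iˢ ⊆ B`. -/
def IdlS (D : BaseData A B) : Submodule ℂ B :=
  Submodule.span ℂ
    {z : B | ∃ φ : A →ₗ[ℂ] B, (∀ (x : B) (a : A), φ ((D.s x).L a) = x * φ a) ∧ ∃ a, z = φ a}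

/-- The right ideal `Iᵗ ⊆ B`. -/
def IdlT (D : BaseData A B) : Submodule ℂ B :=
  Submodule.span ℂ
    {z : B | ∃ ψ : A →ₗ[ℂ] B, (∀ (x : B) (a : A), ψ ((D.t x).L a) = ψ a * x) ∧ ∃ a, z = ψ a}

/-- The elements witnessing left-fullness. -/
def leftFullSet (D : BaseData A B) (Tr : A ⊗[ℂ] A →ₗ[ℂ] A ⊗[ℂ] A) : Set A :=
  {z : A | ∃ ψ : A →ₗ[ℂ] B, (∀ (x : B) (a : A), ψ ((D.t x).L a) = ψ a * x) ∧
    ∃ (a b : A) (n : ℕ) (uu vv : Fin n → A),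
      (∑ j, uu j ⊗ₜ[ℂ] vv j) - Tr (a ⊗ₜ[ℂ] b) ∈ D.relB ∧
      z = ∑ j, (D.s (ψ (vv j))).L (uu j)}

/-- The elements witnessing right-fullness. -/
def rightFullSet (D : BaseData A B) (Tl : A ⊗[ℂ] A →ₗ[ℂ] A ⊗[ℂ] A) : Set A :=
  {z : A | ∃ φ : A →ₗ[ℂ] B, (∀ (x : B) (a : A), φ ((D.s x).L a) = x * φ a) ∧
    ∃ (a b : A) (n : ℕ) (uu vv : Fin n → A),
      (∑ j, uu j ⊗ₜ[ℂ] vv j) - Tl (a ⊗ₜ[ℂ] b) ∈ D.relB ∧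
      z = ∑ j, (D.t (φ (uu j))).L (vv j)}

/-!
Each side of a pentagon equation is first rewritten so that one canonical map is applied to an
actual value of the other rather than to a chosen representative. Representatives may be
exchanged because `u ⊗ v ↦ u ⊗ T̃ρ(v ⊗ c)` and `u ⊗ v ↦ T̃λ(a ⊗ u) ⊗ v` send the relations of
`A ⊗̄ A` into those of `Q₃`, which is (L6) with one argument zero. By non-degeneracy of `Q₃` it
then suffices to compare the two sides after right multiplication by an arbitrary element in the
first (for `T̃ρ`) or third (for `T̃λ`) leg. There (L3) trades the multiplication for the other
canonical map, (L5) splits the product that arises, (L6) interchanges `T̃λ` and `T̃ρ`, and a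
second application of (L3) returns to the original map.
-/

open TensorProduct

theorem SModEq.map_of_le_comap {R M N : Type*} [Ring R] [AddCommGroup M] [Module R M]
    [AddCommGroup N] [Module R N] {U : Submodule R M} {V : Submodule R N} {f : M →ₗ[R] N}
    (hf : U ≤ V.comap f) {x y : M} (h : x ≡ y [SMOD U]) : f x ≡ f y [SMOD V] :=
  (h.map f).mono (Submodule.map_le_iff_le_comap.2 hf)

theorem TensorProduct.sModEq_of_forall_tmul {R M N P : Type*} [CommRing R] [AddCommGroup M]
    [Module R M] [AddCommGroup N] [Module R N] [AddCommGroup P] [Module R P]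
    {Q : Submodule R P} {f g : M ⊗[R] N →ₗ[R] P}
    (h : ∀ m n, f (m ⊗ₜ n) ≡ g (m ⊗ₜ n) [SMOD Q]) (w : M ⊗[R] N) : f w ≡ g w [SMOD Q] := by
  induction w using TensorProduct.induction_on with
  | zero => simp only [map_zero, SModEq.rfl]
  | tmul m n => exact h m n
  | add x y hx hy => simpa only [map_add] using hx.add hy

def rhoInLegs23 (Tr : A ⊗[ℂ] A →ₗ[ℂ] A ⊗[ℂ] A) (c : A) :
    A ⊗[ℂ] A →ₗ[ℂ] A ⊗[ℂ] (A ⊗[ℂ] A) :=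
  map LinearMap.id (Tr ∘ₗ tmulR c)

def lamInLegs12 (Tl : A ⊗[ℂ] A →ₗ[ℂ] A ⊗[ℂ] A) (a : A) :
    A ⊗[ℂ] A →ₗ[ℂ] A ⊗[ℂ] (A ⊗[ℂ] A) :=
  (TensorProduct.assoc ℂ A A A).toLinearMap ∘ₗ map (Tl ∘ₗ tmulL a) LinearMap.id

theorem mulIn1_tmul (r : A) (w : A ⊗[ℂ] A) : mulIn1 (r ⊗ₜ[ℂ] w) = rmul₁ r w := by
  induction w using TensorProduct.induction_on with
  | zero => simp
  | tmul x y => simp [mulIn1, rmul₁]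
  | add x y hx hy => rw [tmul_add, map_add, hx, hy, map_add]

theorem mulIn23_tmul (v : A) (w : A ⊗[ℂ] A) : mulIn23 (w ⊗ₜ[ℂ] v) = rmul₂ v w := by
  induction w using TensorProduct.induction_on with
  | zero => simp
  | tmul x y => simp [mulIn23, rmul₂]
  | add x y hx hy => rw [add_tmul, map_add, hx, hy, map_add]

section Computations

omit [SMulCommClass ℂ A A]

@[simp] theorem rmul₁_tmul (z a b : A) : rmul₁ z (a ⊗ₜ[ℂ] b) = (a * z) ⊗ₜ[ℂ] b := rfl

@[simp] theorem rmul₂_tmul (z a b : A) : rmul₂ z (a ⊗ₜ[ℂ] b) = a ⊗ₜ[ℂ] (b * z) := rfl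

theorem map_mulRight_assoc_tmul (z e : A) (w : A ⊗[ℂ] A) :
    map (LinearMap.mulRight ℂ z) LinearMap.id (TensorProduct.assoc ℂ A A A (w ⊗ₜ e)) =
      TensorProduct.assoc ℂ A A A (rmul₁ z w ⊗ₜ e) := by
  rw [← map_id, map_map_assoc]
  rfl

theorem map_rmul₁_assoc_tmul (r e : A) (w : A ⊗[ℂ] A) :
    map LinearMap.id (rmul₁ r) (TensorProduct.assoc ℂ A A A (w ⊗ₜ e)) =
      TensorProduct.assoc ℂ A A A (rmul₂ r w ⊗ₜ e) := by
  rw [rmul₁, map_map_assoc]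
  rfl

theorem map_rmul₂_assoc_tmul (z e : A) (w : A ⊗[ℂ] A) :
    map LinearMap.id (rmul₂ z) (TensorProduct.assoc ℂ A A A (w ⊗ₜ e)) =
      TensorProduct.assoc ℂ A A A (w ⊗ₜ (e * z)) := by
  rw [rmul₂, map_map_assoc, map_id]
  rfl

theorem map_mulRight_rhoInLegs23 (Tr : A ⊗[ℂ] A →ₗ[ℂ] A ⊗[ℂ] A) (z c : A) (w : A ⊗[ℂ] A) :
    map (LinearMap.mulRight ℂ z) LinearMap.id (rhoInLegs23 Tr c w) =
      rhoInLegs23 Tr c (rmul₁ z w) := by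
  simp only [rhoInLegs23, rmul₁, map_map, LinearMap.comp_id, LinearMap.id_comp]

theorem map_rmul₂_lamInLegs12 (Tl : A ⊗[ℂ] A →ₗ[ℂ] A ⊗[ℂ] A) (z a : A) (w : A ⊗[ℂ] A) :
    map LinearMap.id (rmul₂ z) (lamInLegs12 Tl a w) = lamInLegs12 Tl a (rmul₂ z w) := by
  induction w using TensorProduct.induction_on with
  | zero => simp
  | tmul x y => simp [lamInLegs12, map_rmul₂_assoc_tmul]
  | add x y hx hy => simp only [map_add, hx, hy]

end Computations

namespace BaseData

variable (D : BaseData A B)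

theorem relB_le_comap_tmul_left (a : A) :
    D.relB ≤ D.span₃.comap (TensorProduct.mk ℂ A (A ⊗[ℂ] A) a) :=
  Submodule.span_le.2 fun _ ⟨x, b, c, hw⟩ => by
    simp only [hw, SetLike.mem_coe, Submodule.mem_comap, map_sub, mk_apply]
    exact Submodule.subset_span (Or.inr ⟨x, a, b, c, rfl⟩)

theorem relB_le_comap_assoc_tmul_right (e : A) :
    D.relB ≤ D.span₃.comap
      ((TensorProduct.assoc ℂ A A A).toLinearMap ∘ₗ (TensorProduct.mk ℂ (A ⊗[ℂ] A) A).flip e) :=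
  Submodule.span_le.2 fun _ ⟨x, a, b, hw⟩ => by
    simp only [hw, SetLike.mem_coe, Submodule.mem_comap, map_sub, LinearMap.comp_apply,
      LinearMap.flip_apply, mk_apply, LinearEquiv.coe_coe, assoc_tmul]
    exact Submodule.subset_span (Or.inl ⟨x, a, b, e, rfl⟩)

theorem span₃_le_comap_rmul₁ (r : A) : D.span₃ ≤ D.span₃.comap (map LinearMap.id (rmul₁ r)) := by
  refine Submodule.span_le.2 ?_
  rintro _ (⟨x, a, b, c, rfl⟩ | ⟨x, a, b, c, rfl⟩) <;>
    simp only [SetLike.mem_coe, Submodule.mem_comap, map_sub, map_tmul, rmul₁_tmul,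
      LinearMap.id_coe, id_eq]
  · rw [← (D.t x).hL]
    exact Submodule.subset_span (Or.inl ⟨x, a, b * r, c, rfl⟩)
  · rw [← (D.s x).hL]
    exact Submodule.subset_span (Or.inr ⟨x, a, b * r, c, rfl⟩)

end BaseData

section Axioms

variable {D : BaseData A B} {Tl Tr : A ⊗[ℂ] A →ₗ[ℂ] A ⊗[ℂ] A}

theorem condL3.sModEq (hL3 : condL3 D Tl Tr) (a b c : A) :
    rmul₂ c (Tl (a ⊗ₜ b)) ≡ rmul₁ a (Tr (b ⊗ₜ c)) [SMOD D.relB] :=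
  SModEq.sub_mem.2 (hL3 a b c)

theorem condL6.sModEq (hL6 : condL6 D Tl Tr) {a b c : A} {u p : A ⊗[ℂ] A}
    (hu : u ≡ Tr (b ⊗ₜ c) [SMOD D.relB]) (hp : p ≡ Tl (a ⊗ₜ b) [SMOD D.relB]) :
    lamInLegs12 Tl a u ≡ rhoInLegs23 Tr c p [SMOD D.span₃] :=
  SModEq.sub_mem.2 (hL6 a b c u p (SModEq.sub_mem.1 hu) (SModEq.sub_mem.1 hp))

theorem condL6.relB_le_comap_rhoInLegs23 (hL6 : condL6 D Tl Tr) (c : A) :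
    D.relB ≤ D.span₃.comap (rhoInLegs23 Tr c) := fun w hw => by
  have h := hL6.sModEq (a := 0) (b := 0) (c := c) (u := 0) (p := w)
    (by simp) (by simpa [SModEq.zero] using hw)
  rwa [map_zero, SModEq.comm, SModEq.zero] at h

theorem condL6.relB_le_comap_lamInLegs12 (hL6 : condL6 D Tl Tr) (a : A) :
    D.relB ≤ D.span₃.comap (lamInLegs12 Tl a) := fun w hw => by
  have h := hL6.sModEq (a := a) (b := 0) (c := 0) (u := w) (p := 0)
    (by simpa [SModEq.zero] using hw) (by simp)
  rwa [map_zero, SModEq.zero] at h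

theorem condL5rho.rhoInLegs23_rmul₂ (hL5r : condL5rho D Tr) {ι : Type*} [Fintype ι]
    {b c : A} {r s : ι → A} (hrs : ∑ i, r i ⊗ₜ s i ≡ Tr (b ⊗ₜ c) [SMOD D.relB])
    (w : A ⊗[ℂ] A) :
    rhoInLegs23 Tr c (rmul₂ b w) ≡
      ∑ i, map LinearMap.id (rmul₁ (r i)) (rhoInLegs23 Tr (s i) w) [SMOD D.span₃] := by
  have key := TensorProduct.sModEq_of_forall_tmul (Q := D.span₃)
    (f := rhoInLegs23 Tr c ∘ₗ rmul₂ b)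
    (g := ∑ i, map LinearMap.id (rmul₁ (r i)) ∘ₗ rhoInLegs23 Tr (s i)) ?_ w
  · simpa only [LinearMap.comp_apply, LinearMap.sum_apply] using key
  intro x y
  have h5 := SModEq.sub_mem.2 (hL5r y b c _ (SModEq.sub_mem.1 hrs))
  simp only [map_sum, map_tmul, LinearMap.id_coe, id_eq, LinearMap.comp_apply, tmulL,
    mk_apply, mulIn1_tmul] at h5
  simpa [rhoInLegs23, tmulR, tmul_sum] using
    SModEq.map_of_le_comap (D.relB_le_comap_tmul_left x) h5

theorem condL5lam.lamInLegs12_rmul₁ (hL5l : condL5lam D Tl) {ι : Type*} [Fintype ι]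
    {a b : A} {r s : ι → A} (hrs : ∑ i, r i ⊗ₜ s i ≡ Tl (a ⊗ₜ b) [SMOD D.relB])
    (w : A ⊗[ℂ] A) :
    lamInLegs12 Tl a (rmul₁ b w) ≡
      ∑ i, map LinearMap.id (rmul₁ (s i)) (lamInLegs12 Tl (r i) w) [SMOD D.span₃] := by
  have key := TensorProduct.sModEq_of_forall_tmul (Q := D.span₃)
    (f := lamInLegs12 Tl a ∘ₗ rmul₁ b)
    (g := ∑ i, map LinearMap.id (rmul₁ (s i)) ∘ₗ lamInLegs12 Tl (r i)) ?_ w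
  · simpa only [LinearMap.comp_apply, LinearMap.sum_apply] using key
  intro x y
  have h5 := SModEq.sub_mem.2 (hL5l a x b _ (SModEq.sub_mem.1 hrs))
  simp only [map_sum, map_tmul, LinearMap.id_coe, id_eq, LinearMap.comp_apply, tmulR,
    LinearMap.flip_apply, mk_apply, mulIn23_tmul] at h5
  simpa [lamInLegs12, tmulL, map_rmul₁_assoc_tmul, sum_tmul] using
    SModEq.map_of_le_comap (D.relB_le_comap_assoc_tmul_right y) h5

end Axioms

section Pentagon

variable {D : BaseData A B} {Tl Tr : A ⊗[ℂ] A →ₗ[ℂ] A ⊗[ℂ] A}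
  {ι : Type*} [Fintype ι] {κ : ι → Type*} [∀ i, Fintype (κ i)]

theorem sum_tmul_sModEq_rhoInLegs23 (hL6 : condL6 D Tl Tr) {c : A} {x : A ⊗[ℂ] A}
    {u v : ι → A} {p q : (i : ι) → κ i → A}
    (huv : ∑ i, u i ⊗ₜ v i ≡ x [SMOD D.relB])
    (hpq : ∀ i, ∑ k, p i k ⊗ₜ q i k ≡ Tr (v i ⊗ₜ c) [SMOD D.relB]) :
    ∑ i, ∑ k, u i ⊗ₜ (p i k ⊗ₜ q i k) ≡ rhoInLegs23 Tr c x [SMOD D.span₃] :=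
  calc ∑ i, ∑ k, u i ⊗ₜ (p i k ⊗ₜ q i k)
      = ∑ i, u i ⊗ₜ ∑ k, p i k ⊗ₜ q i k := by simp only [tmul_sum]
    _ ≡ ∑ i, u i ⊗ₜ Tr (v i ⊗ₜ c) [SMOD D.span₃] :=
      SModEq.sum fun i _ => SModEq.map_of_le_comap (D.relB_le_comap_tmul_left (u i)) (hpq i)
    _ = rhoInLegs23 Tr c (∑ i, u i ⊗ₜ v i) := by simp [rhoInLegs23, tmulR]
    _ ≡ rhoInLegs23 Tr c x [SMOD D.span₃] :=
      SModEq.map_of_le_comap (hL6.relB_le_comap_rhoInLegs23 c) huv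

theorem sum_assoc_sModEq_lamInLegs12 (hL6 : condL6 D Tl Tr) {a : A} {x : A ⊗[ℂ] A}
    {u v : ι → A} (huv : ∑ i, u i ⊗ₜ v i ≡ x [SMOD D.relB]) :
    ∑ i, TensorProduct.assoc ℂ A A A (Tl (a ⊗ₜ u i) ⊗ₜ v i) ≡
      lamInLegs12 Tl a x [SMOD D.span₃] :=
  calc ∑ i, TensorProduct.assoc ℂ A A A (Tl (a ⊗ₜ u i) ⊗ₜ v i)
      = lamInLegs12 Tl a (∑ i, u i ⊗ₜ v i) := by simp [lamInLegs12, tmulL]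
    _ ≡ lamInLegs12 Tl a x [SMOD D.span₃] :=
      SModEq.map_of_le_comap (hL6.relB_le_comap_lamInLegs12 a) huv

theorem sum_tmul_tmul_sModEq_assoc {f g : ι → A} {x : A ⊗[ℂ] A}
    (hfg : ∑ i, f i ⊗ₜ g i ≡ x [SMOD D.relB]) (e : A) :
    ∑ i, f i ⊗ₜ (g i ⊗ₜ e) ≡ TensorProduct.assoc ℂ A A A (x ⊗ₜ e) [SMOD D.span₃] := by
  simpa [sum_tmul] using SModEq.map_of_le_comap (D.relB_le_comap_assoc_tmul_right e) hfg

theorem sum_tmul_sModEq_tmul {f g : ι → A} {x : A ⊗[ℂ] A}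
    (hfg : ∑ i, f i ⊗ₜ g i ≡ x [SMOD D.relB]) (d : A) :
    ∑ i, d ⊗ₜ (f i ⊗ₜ g i) ≡ d ⊗ₜ x [SMOD D.span₃] := by
  simpa [tmul_sum] using SModEq.map_of_le_comap (D.relB_le_comap_tmul_left d) hfg

theorem rhoInLegs23_sModEq_sum_assoc (hL3 : condL3 D Tl Tr) (hL5r : condL5rho D Tr)
    (hL6 : condL6 D Tl Tr)
    (hQ1 : ∀ u : A ⊗[ℂ] (A ⊗[ℂ] A),
      (∀ c : A, TensorProduct.map (LinearMap.mulRight ℂ c)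
        (LinearMap.id : A ⊗[ℂ] A →ₗ[ℂ] A ⊗[ℂ] A) u ∈ D.span₃) → u ∈ D.span₃)
    {a b c : A} {r s : ι → A} {d e : (i : ι) → κ i → A}
    (hrs : ∑ i, r i ⊗ₜ s i ≡ Tr (b ⊗ₜ c) [SMOD D.relB])
    (hde : ∀ i, ∑ k, d i k ⊗ₜ e i k ≡ Tr (a ⊗ₜ s i) [SMOD D.relB]) :
    rhoInLegs23 Tr c (Tr (a ⊗ₜ b)) ≡
      ∑ i, ∑ k, TensorProduct.assoc ℂ A A A (Tr (d i k ⊗ₜ r i) ⊗ₜ e i k) [SMOD D.span₃] := by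
  refine SModEq.sub_mem.2 (hQ1 _ fun z => ?_)
  rw [map_sub, ← SModEq.sub_mem]
  calc map (LinearMap.mulRight ℂ z) LinearMap.id (rhoInLegs23 Tr c (Tr (a ⊗ₜ b)))
      = rhoInLegs23 Tr c (rmul₁ z (Tr (a ⊗ₜ b))) := map_mulRight_rhoInLegs23 Tr z c _
    _ ≡ rhoInLegs23 Tr c (rmul₂ b (Tl (z ⊗ₜ a))) [SMOD D.span₃] :=
      SModEq.map_of_le_comap (hL6.relB_le_comap_rhoInLegs23 c) (hL3.sModEq z a b).symm
    _ ≡ ∑ i, map LinearMap.id (rmul₁ (r i)) (rhoInLegs23 Tr (s i) (Tl (z ⊗ₜ a)))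
        [SMOD D.span₃] := hL5r.rhoInLegs23_rmul₂ hrs _
    _ ≡ ∑ i, map LinearMap.id (rmul₁ (r i)) (lamInLegs12 Tl z (∑ k, d i k ⊗ₜ e i k))
        [SMOD D.span₃] := SModEq.sum fun i _ =>
      SModEq.map_of_le_comap (D.span₃_le_comap_rmul₁ (r i)) (hL6.sModEq (hde i) .rfl).symm
    _ = ∑ i, ∑ k, TensorProduct.assoc ℂ A A A (rmul₂ (r i) (Tl (z ⊗ₜ d i k)) ⊗ₜ e i k) := by
      simp [lamInLegs12, tmulL, map_rmul₁_assoc_tmul]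
    _ ≡ ∑ i, ∑ k, TensorProduct.assoc ℂ A A A (rmul₁ z (Tr (d i k ⊗ₜ r i)) ⊗ₜ e i k)
        [SMOD D.span₃] := SModEq.sum fun i _ => SModEq.sum fun k _ =>
      SModEq.map_of_le_comap (D.relB_le_comap_assoc_tmul_right _) (hL3.sModEq z _ _)
    _ = map (LinearMap.mulRight ℂ z) LinearMap.id
          (∑ i, ∑ k, TensorProduct.assoc ℂ A A A (Tr (d i k ⊗ₜ r i) ⊗ₜ e i k)) := by
      simp [map_mulRight_assoc_tmul]

theorem lamInLegs12_sModEq_sum_tmul (hL3 : condL3 D Tl Tr) (hL5l : condL5lam D Tl)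
    (hL6 : condL6 D Tl Tr)
    (hQ3 : ∀ u : A ⊗[ℂ] (A ⊗[ℂ] A),
      (∀ c : A, TensorProduct.map (LinearMap.id : A →ₗ[ℂ] A)
        (TensorProduct.map LinearMap.id (LinearMap.mulRight ℂ c)) u ∈ D.span₃) →
      u ∈ D.span₃)
    {a b c : A} {r s : ι → A} {d e : (i : ι) → κ i → A}
    (hrs : ∑ i, r i ⊗ₜ s i ≡ Tl (a ⊗ₜ b) [SMOD D.relB])
    (hde : ∀ i, ∑ k, d i k ⊗ₜ e i k ≡ Tl (r i ⊗ₜ c) [SMOD D.relB]) :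
    lamInLegs12 Tl a (Tl (b ⊗ₜ c)) ≡
      ∑ i, ∑ k, d i k ⊗ₜ Tl (s i ⊗ₜ e i k) [SMOD D.span₃] := by
  refine SModEq.sub_mem.2 (hQ3 _ fun z => ?_)
  rw [map_sub, ← SModEq.sub_mem]
  calc map LinearMap.id (rmul₂ z) (lamInLegs12 Tl a (Tl (b ⊗ₜ c)))
      = lamInLegs12 Tl a (rmul₂ z (Tl (b ⊗ₜ c))) := map_rmul₂_lamInLegs12 Tl z a _
    _ ≡ lamInLegs12 Tl a (rmul₁ b (Tr (c ⊗ₜ z))) [SMOD D.span₃] :=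
      SModEq.map_of_le_comap (hL6.relB_le_comap_lamInLegs12 a) (hL3.sModEq b c z)
    _ ≡ ∑ i, map LinearMap.id (rmul₁ (s i)) (lamInLegs12 Tl (r i) (Tr (c ⊗ₜ z)))
        [SMOD D.span₃] := hL5l.lamInLegs12_rmul₁ hrs _
    _ ≡ ∑ i, map LinearMap.id (rmul₁ (s i)) (rhoInLegs23 Tr z (∑ k, d i k ⊗ₜ e i k))
        [SMOD D.span₃] := SModEq.sum fun i _ =>
      SModEq.map_of_le_comap (D.span₃_le_comap_rmul₁ (s i)) (hL6.sModEq .rfl (hde i))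
    _ = ∑ i, ∑ k, d i k ⊗ₜ rmul₁ (s i) (Tr (e i k ⊗ₜ z)) := by
      simp [rhoInLegs23, tmulR]
    _ ≡ ∑ i, ∑ k, d i k ⊗ₜ rmul₂ z (Tl (s i ⊗ₜ e i k)) [SMOD D.span₃] :=
      SModEq.sum fun i _ => SModEq.sum fun k _ =>
        SModEq.map_of_le_comap (D.relB_le_comap_tmul_left _) (hL3.sModEq _ _ z).symm
    _ = map LinearMap.id (rmul₂ z) (∑ i, ∑ k, d i k ⊗ₜ Tl (s i ⊗ₜ e i k)) := by
      simp

end Pentagon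

/-- the pentagon equations for the canonical maps, under non-degeneracy of the
balanced triple tensor product in the first and third legs. -/
theorem stmt5 (D : BaseData A B) (Tl Tr : A ⊗[ℂ] A →ₗ[ℂ] A ⊗[ℂ] A)
    (h : IsLeftBialgebroid D Tl Tr)
    (hQ1 : ∀ u : A ⊗[ℂ] (A ⊗[ℂ] A),
      (∀ c : A, TensorProduct.map (LinearMap.mulRight ℂ c)
        (LinearMap.id : A ⊗[ℂ] A →ₗ[ℂ] A ⊗[ℂ] A) u ∈ D.span₃) → u ∈ D.span₃)
    (hQ3 : ∀ u : A ⊗[ℂ] (A ⊗[ℂ] A),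
      (∀ c : A, TensorProduct.map (LinearMap.id : A →ₗ[ℂ] A)
        (TensorProduct.map LinearMap.id (LinearMap.mulRight ℂ c)) u ∈ D.span₃) →
      u ∈ D.span₃) :
    (∀ (a b c : A) (n : ℕ) (uu vv : Fin n → A) (m : Fin n → ℕ)
        (pp qq : (j : Fin n) → Fin (m j) → A)
        (nl : ℕ) (rr ss : Fin nl → A) (ml : Fin nl → ℕ)
        (dd ee : (l : Fin nl) → Fin (ml l) → A)
        (mk2 : (l : Fin nl) → Fin (ml l) → ℕ)
        (ff gg : (l : Fin nl) → (m' : Fin (ml l)) → Fin (mk2 l m') → A),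
      (∑ j, uu j ⊗ₜ[ℂ] vv j) - Tr (a ⊗ₜ[ℂ] b) ∈ D.relB →
      (∀ j, (∑ k, pp j k ⊗ₜ[ℂ] qq j k) - Tr (vv j ⊗ₜ[ℂ] c) ∈ D.relB) →
      (∑ l, rr l ⊗ₜ[ℂ] ss l) - Tr (b ⊗ₜ[ℂ] c) ∈ D.relB →
      (∀ l, (∑ m', dd l m' ⊗ₜ[ℂ] ee l m') - Tr (a ⊗ₜ[ℂ] ss l) ∈ D.relB) →
      (∀ l m', (∑ n', ff l m' n' ⊗ₜ[ℂ] gg l m' n') - Tr (dd l m' ⊗ₜ[ℂ] rr l) ∈ D.relB) →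
      (∑ j, ∑ k, uu j ⊗ₜ[ℂ] (pp j k ⊗ₜ[ℂ] qq j k)) -
        (∑ l, ∑ m', ∑ n', ff l m' n' ⊗ₜ[ℂ] (gg l m' n' ⊗ₜ[ℂ] ee l m')) ∈ D.span₃) ∧
    (∀ (a b c : A) (n : ℕ) (uu vv : Fin n → A)
        (nl : ℕ) (rr ss : Fin nl → A) (ml : Fin nl → ℕ)
        (dd ee : (l : Fin nl) → Fin (ml l) → A)
        (mk2 : (l : Fin nl) → Fin (ml l) → ℕ)
        (ff gg : (l : Fin nl) → (m' : Fin (ml l)) → Fin (mk2 l m') → A),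
      (∑ j, uu j ⊗ₜ[ℂ] vv j) - Tl (b ⊗ₜ[ℂ] c) ∈ D.relB →
      (∑ l, rr l ⊗ₜ[ℂ] ss l) - Tl (a ⊗ₜ[ℂ] b) ∈ D.relB →
      (∀ l, (∑ m', dd l m' ⊗ₜ[ℂ] ee l m') - Tl (rr l ⊗ₜ[ℂ] c) ∈ D.relB) →
      (∀ l m', (∑ n', ff l m' n' ⊗ₜ[ℂ] gg l m' n') - Tl (ss l ⊗ₜ[ℂ] ee l m') ∈ D.relB) →
      (∑ j, (TensorProduct.assoc ℂ A A A) (Tl (a ⊗ₜ[ℂ] uu j) ⊗ₜ[ℂ] vv j)) -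
        (∑ l, ∑ m', ∑ n', dd l m' ⊗ₜ[ℂ] (ff l m' n' ⊗ₜ[ℂ] gg l m' n')) ∈ D.span₃) := by
  obtain ⟨-, -, -, -, hL3, -, hL5l, hL5r, hL6⟩ := h
  simp only [← SModEq.sub_mem]
  refine ⟨fun a b c n uu vv m pp qq nl rr ss ml dd ee mk2 ff gg hU hP hRs hD hF => ?_,
    fun a b c n uu vv nl rr ss ml dd ee mk2 ff gg hU hRs hD hF => ?_⟩
  · calc _ ≡ rhoInLegs23 Tr c (Tr (a ⊗ₜ b)) [SMOD D.span₃] :=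
          sum_tmul_sModEq_rhoInLegs23 hL6 hU hP
      _ ≡ ∑ l, ∑ m', TensorProduct.assoc ℂ A A A (Tr (dd l m' ⊗ₜ rr l) ⊗ₜ ee l m')
          [SMOD D.span₃] := rhoInLegs23_sModEq_sum_assoc hL3 hL5r hL6 hQ1 hRs hD
      _ ≡ _ [SMOD D.span₃] := (SModEq.sum fun l _ => SModEq.sum fun m' _ =>
          sum_tmul_tmul_sModEq_assoc (hF l m') _).symm
  · calc _ ≡ lamInLegs12 Tl a (Tl (b ⊗ₜ c)) [SMOD D.span₃] := sum_assoc_sModEq_lamInLegs12 hL6 hU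
      _ ≡ ∑ l, ∑ m', dd l m' ⊗ₜ Tl (ss l ⊗ₜ ee l m') [SMOD D.span₃] :=
          lamInLegs12_sModEq_sum_tmul hL3 hL5l hL6 hQ3 hRs hD
      _ ≡ _ [SMOD D.span₃] := (SModEq.sum fun l _ => SModEq.sum fun m' _ =>
          sum_tmul_sModEq_tmul (hF l m') _).symm

end LeftBgd
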